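/- arXiv:0710.4989 — 5 statements merged into one kernel-verified Lean document; each statement's English description precedes it below -/
import Mathlib

section
/- Let μ_1, ..., μ_M be distinct positive reals and let W be the space of real sequences (Δy_n)_{n≥1} with ∑_n μ^n |Δy_n|/n! < ∞ for μ = max μ_i and satisfying ∑_{n=1}^∞ (μ_i^n/n!) Δy_n = 0 for all i. Then every element of W is uniquely expressible as Δy = ∑_{m > M} Δy_m · w^{(m)}, where w^{(m)} are the basis sequences with w^{(m)}_m = 1, w^{(m)}_n = (−1)^{M−n+1}(n!/m!) s_{α(m−M,M−n)}(μ) for n ≤ M, and 0 otherwise. -/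
/-!
On its first `M` coordinates a sequence `Δy ∈ W` solves `A (Δy_1, …, Δy_M) = -∑_{m > M} Δy_m v_m`,
where `A_{in} = μ_i^n / n!` is a rescaled Vandermonde matrix, hence invertible, and
`v_m = (μ_i^m / m!)_i`. The hook Schur identity `∑_{b < M} (-1)^b μ_i^(M-b) s_{(a+1,1^b)}(μ) =
μ_i^(M+1+a)`, proved by induction on `a` from the Pieri rule
`h_{a+1} e_{b+1} = s_{(a+1,1^(b+1))} + s_{(a+2,1^b)}` and Vieta's formulas, says exactly that
`A (w^{(m)}_1, …, w^{(m)}_M) = -v_m`, i.e. `w^{(m)} ∈ W`. Applying the continuous map `A⁻¹` to the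
convergent series `∑ Δy_m v_m` gives the expansion on the first `M` coordinates; beyond `M` each
`w^{(m)}` is the `m`-th unit vector, which settles the remaining coordinates and uniqueness.
-/

/-- The set of cells of the Young diagram with row lengths given by `lam`. -/
def youngCells (lam : List ℕ) : Finset (ℕ × ℕ) :=
  (Finset.range lam.length).biUnion fun i => {i} ×ˢ Finset.range (lam.getD i 0)

/-- The Schur polynomial `s_lam` in `M` variables, evaluated at `μ`, defined
combinatorially as the sum over semistandard fillings of the diagram `lam`
with entries in `Fin M` of the corresponding monomials. -/
noncomputable def schur (M : ℕ) (μ : Fin M → ℝ) (lam : List ℕ) : ℝ :=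
  ∑ T : youngCells lam → Fin M,
    if (∀ c c' : youngCells lam,
          (c : ℕ × ℕ).1 = (c' : ℕ × ℕ).1 → (c : ℕ × ℕ).2 + 1 = (c' : ℕ × ℕ).2 → T c ≤ T c') ∧
       (∀ c c' : youngCells lam,
          (c : ℕ × ℕ).1 + 1 = (c' : ℕ × ℕ).1 → (c : ℕ × ℕ).2 = (c' : ℕ × ℕ).2 → T c < T c')
    then ∏ c : youngCells lam, μ (T c) else 0

theorem Fin.monotone_cons {α : Type*} [Preorder α] {n : ℕ} {a : α} {f : Fin n → α} :
    Monotone (Fin.cons a f : Fin (n + 1) → α) ↔ (∀ j, a ≤ f j) ∧ Monotone f := by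
  simpa only [monotone_iff_forall_lt] using! Fin.liftFun_cons (α := α) (· ≤ ·) (f := f) (a := a)

section Hook

theorem mem_youngCells_hook {a b : ℕ} {c : ℕ × ℕ} :
    c ∈ youngCells ((a + 1) :: List.replicate b 1) ↔
      (c.1 = 0 ∧ c.2 < a + 1) ∨ (0 < c.1 ∧ c.1 ≤ b ∧ c.2 = 0) := by
  rcases c with ⟨_ | i, j⟩
  · simp [youngCells]
  · suffices i < b → (j < (List.replicate b 1)[i]?.getD 0 ↔ j = 0) by simpa [youngCells]
    intro hi
    simp [hi]

abbrev hookCells (a b : ℕ) := youngCells ((a + 1) :: List.replicate b 1)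

def hookRow (a b : ℕ) (j : Fin (a + 1)) : hookCells a b :=
  ⟨(0, j), mem_youngCells_hook.2 (.inl ⟨rfl, j.isLt⟩)⟩

def hookCol (a b : ℕ) (i : Fin (b + 1)) : hookCells a b :=
  ⟨(i, 0), mem_youngCells_hook.2 (by omega)⟩

def hookCellEquiv (a b : ℕ) : Fin (a + 1) ⊕ Fin b ≃ hookCells a b where
  toFun := Sum.elim (hookRow a b) (hookCol a b ∘ Fin.succ)
  invFun c :=
    have hc := mem_youngCells_hook.1 c.2
    if h : (c : ℕ × ℕ).1 = 0 then .inl ⟨(c : ℕ × ℕ).2, by omega⟩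
    else .inr ⟨(c : ℕ × ℕ).1 - 1, by omega⟩
  left_inv := by rintro (j | i) <;> simp [hookRow, hookCol]
  right_inv := by
    rintro ⟨⟨_ | i, j⟩, hc⟩
    · simp [hookRow]
    · obtain rfl : j = 0 := by have := mem_youngCells_hook.1 hc; dsimp only at this; omega
      simp [hookCol]

variable {a b : ℕ}

theorem hookCells_rowAdjacent_iff {α : Type*} (r : α → α → Prop) (T : hookCells a b → α) :
    (∀ c c' : hookCells a b, (c : ℕ × ℕ).1 = (c' : ℕ × ℕ).1 → (c : ℕ × ℕ).2 + 1 = (c' : ℕ × ℕ).2 →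
      r (T c) (T c')) ↔ ∀ j : Fin a, r (T (hookRow a b j.castSucc)) (T (hookRow a b j.succ)) := by
  refine ⟨fun h j => h _ _ rfl (by simp [hookRow]), ?_⟩
  rintro h ⟨⟨i, j⟩, hc⟩ ⟨⟨i', j'⟩, hc'⟩ (rfl : i = i') (rfl : j + 1 = j')
  have hc := mem_youngCells_hook.1 hc
  have hc' := mem_youngCells_hook.1 hc'
  obtain rfl : i = 0 := by dsimp only at hc hc'; omega
  exact h ⟨j, by dsimp only at hc'; omega⟩

theorem hookCells_colAdjacent_iff {α : Type*} (r : α → α → Prop) (T : hookCells a b → α) :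
    (∀ c c' : hookCells a b, (c : ℕ × ℕ).1 + 1 = (c' : ℕ × ℕ).1 → (c : ℕ × ℕ).2 = (c' : ℕ × ℕ).2 →
      r (T c) (T c')) ↔ ∀ i : Fin b, r (T (hookCol a b i.castSucc)) (T (hookCol a b i.succ)) := by
  refine ⟨fun h i => h _ _ (by simp [hookCol]) rfl, ?_⟩
  rintro h ⟨⟨i, j⟩, hc⟩ ⟨⟨i', j'⟩, hc'⟩ (rfl : i + 1 = i') (rfl : j = j')
  have hc := mem_youngCells_hook.1 hc
  have hc' := mem_youngCells_hook.1 hc'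
  obtain rfl : j = 0 := by dsimp only at hc hc'; omega
  exact h ⟨i, by dsimp only at hc'; omega⟩

end Hook

section SymmetricFunctions
variable {M : ℕ} (μ : Fin M → ℝ)

/- `completeSymm μ n` and `elemSymm μ k` are `h_n(μ)` and `e_k(μ)`; `hookSchur μ a b` is
`s_{(a+1,1^b)}(μ)`, with `f` filling the first row and `g` the first column below the corner. -/
def completeSymm (n : ℕ) : ℝ :=
  ∑ f : Fin n → Fin M, if Monotone f then ∏ i, μ (f i) else 0

def elemSymm (k : ℕ) : ℝ :=
  ∑ g : Fin k → Fin M, if StrictMono g then ∏ i, μ (g i) else 0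

def hookSchur (a b : ℕ) : ℝ :=
  ∑ f : Fin (a + 1) → Fin M, ∑ g : Fin b → Fin M,
    if Monotone f ∧ StrictMono (Fin.cons (f 0) g : Fin (b + 1) → Fin M)
    then (∏ i, μ (f i)) * ∏ j, μ (g j) else 0

theorem schur_hook (a b : ℕ) :
    schur M μ ((a + 1) :: List.replicate b 1) = hookSchur μ a b := by
  rw [schur, hookSchur, ← Fintype.sum_prod_type']
  refine Fintype.sum_equiv (((hookCellEquiv a b).symm.arrowCongr (Equiv.refl _)).trans
    (Equiv.sumArrowEquivProdArrow _ _ _)) _ _ fun T => ?_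
  have hcol : (Fin.cons (T (hookRow a b 0)) (fun i => T (hookCol a b i.succ)) : Fin (b + 1) → Fin M)
      = T ∘ hookCol a b := Fin.cons_self_tail (T ∘ hookCol a b)
  have hprod : ∏ c, μ (T c) =
      (∏ j, μ (T (hookRow a b j))) * ∏ i : Fin b, μ (T (hookCol a b i.succ)) := by
    rw [← (hookCellEquiv a b).prod_comp, Fintype.prod_sum_type]
    rfl
  refine if_congr (and_congr ?_ ?_) hprod rfl
  · rw [hookCells_rowAdjacent_iff, Fin.monotone_iff_le_succ]
    rfl
  · rw [hookCells_colAdjacent_iff]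
    change _ ↔ StrictMono (Fin.cons (T (hookRow a b 0)) fun i : Fin b => T (hookCol a b i.succ))
    rw [hcol, Fin.strictMono_iff_lt_succ]
    rfl

theorem hookSchur_zero_right (a : ℕ) : hookSchur μ a 0 = completeSymm μ (a + 1) := by
  simp [hookSchur, completeSymm, Subsingleton.strictMono]

theorem hookSchur_zero_left (b : ℕ) : hookSchur μ 0 b = elemSymm μ (b + 1) := by
  rw [hookSchur, elemSymm, ← Fintype.sum_prod_type']
  refine Fintype.sum_equiv ((Equiv.funUnique (Fin 1) (Fin M)).prodCongr (Equiv.refl _) |>.trans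
    (Fin.consEquiv fun _ => Fin M)) _ _ fun p => ?_
  simp [Subsingleton.monotone, Fin.prod_univ_succ, Fin.consEquiv]

theorem hookSchur_eq_zero {a b : ℕ} (hb : M ≤ b) : hookSchur μ a b = 0 := by
  refine Finset.sum_eq_zero fun f _ => Finset.sum_eq_zero fun g _ => if_neg fun h => ?_
  have := Fintype.card_le_of_injective _ h.2.injective
  rw [Fintype.card_fin, Fintype.card_fin] at this
  omega

theorem completeSymm_mul_elemSymm (a b : ℕ) :
    completeSymm μ (a + 1) * elemSymm μ (b + 1) =
      hookSchur μ a (b + 1) + hookSchur μ (a + 1) b := by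
  -- A row `f` and a column `h` form a hook tableau of shape `(a+1, 1^(b+1))` when `f 0 < h 0`;
  -- otherwise `h 0` is prepended to the row, giving one of shape `(a+2, 1^b)`.
  have split (f : Fin (a + 1) → Fin M) (h : Fin (b + 1) → Fin M) :
      (if Monotone f then ∏ i, μ (f i) else 0) * (if StrictMono h then ∏ j, μ (h j) else 0) =
        (if Monotone f ∧ StrictMono (Fin.cons (f 0) h : Fin (b + 2) → Fin M)
          then (∏ i, μ (f i)) * ∏ j, μ (h j) else 0) +
        (if Monotone (Fin.cons (h 0) f : Fin (a + 2) → Fin M) ∧ StrictMono h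
          then (∏ i, μ (f i)) * ∏ j, μ (h j) else 0) := by
    simp only [Fin.strictMono_cons, Fin.monotone_cons]
    by_cases hf : Monotone f
    · by_cases hh : StrictMono h
      · have hlt : (∀ j, f 0 < h j) ↔ f 0 < h 0 :=
          ⟨fun H => H 0, fun H j => H.trans_le (hh.monotone (Fin.zero_le j))⟩
        have hle : (∀ j, h 0 ≤ f j) ↔ h 0 ≤ f 0 :=
          ⟨fun H => H 0, fun H j => H.trans (hf (Fin.zero_le j))⟩
        rcases lt_or_ge (f 0) (h 0) with H | H
        · simp [hf, hh, hlt, hle, H, not_le.2 H]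
        · simp [hf, hh, hlt, hle, H, not_lt.2 H]
      · simp [hh]
    · simp [hf]
  rw [completeSymm, elemSymm, Finset.sum_mul_sum]
  simp only [split, Finset.sum_add_distrib]
  congr 1
  rw [hookSchur, ← Fintype.sum_prod_type', ← Fintype.sum_prod_type']
  refine Fintype.sum_equiv
    (⟨fun p => (Fin.cons (p.2 0) p.1, Fin.tail p.2), fun q => (Fin.tail q.1, Fin.cons (q.1 0) q.2),
      fun p => by simp, fun q => by simp⟩ :
      (Fin (a + 1) → Fin M) × (Fin (b + 1) → Fin M) ≃ (Fin (a + 2) → Fin M) × (Fin b → Fin M))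
    _ _ fun ⟨f, h⟩ => ?_
  simp only [Equiv.coe_fn_mk, Fin.cons_zero, Fin.cons_self_tail]
  refine if_congr Iff.rfl ?_ rfl
  simp only [Fin.prod_univ_succ (n := a + 1), Fin.prod_univ_succ (n := b), Fin.cons_zero,
    Fin.cons_succ, Fin.tail]
  ring

theorem elemSymm_eq_esymm (k : ℕ) :
    elemSymm μ k = ((Finset.univ : Finset (Fin M)).val.map μ).esymm k := by
  classical
  have hcard {g : Fin k → Fin M} (hg : StrictMono g) : (Finset.univ.image g).card = k := by
    simp [Finset.card_image_of_injective _ hg.injective]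
  rw [Finset.esymm_map_val, elemSymm, ← Finset.sum_filter]
  refine Finset.sum_bij (fun g _ => Finset.univ.image g) (fun g hg => ?_) (fun g hg g' hg' h => ?_)
    (fun t ht => ?_) (fun g hg => ?_)
  · simp only [Finset.mem_filter, Finset.mem_univ, true_and] at hg
    simpa using hcard hg
  · simp only [Finset.mem_filter, Finset.mem_univ, true_and] at hg hg'
    rw [Finset.orderEmbOfFin_unique (hcard hg) (by simp) hg,
      Finset.orderEmbOfFin_unique (hcard hg) (fun x => by simp [h]) hg']
  · rw [Finset.mem_powersetCard] at ht
    refine ⟨t.orderEmbOfFin ht.2, by simpa using (t.orderEmbOfFin ht.2).strictMono, ?_⟩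
    simp [Finset.image_orderEmbOfFin_univ]
  · simp only [Finset.mem_filter, Finset.mem_univ, true_and] at hg
    rw [Finset.prod_image fun x _ y _ h => hg.injective h]

theorem sum_alternating_elemSymm (i : Fin M) :
    ∑ k ∈ Finset.range (M + 1), (-1) ^ k * μ i ^ (M - k) * elemSymm μ k = 0 := by
  have vieta := congrArg (Polynomial.eval (μ i))
    (Multiset.prod_X_sub_X_eq_sum_esymm ((Finset.univ : Finset (Fin M)).val.map μ))
  simp only [Polynomial.eval_multiset_prod, Multiset.map_map, Function.comp_def,
    Polynomial.eval_sub, Polynomial.eval_X, Polynomial.eval_C, Polynomial.eval_finsetSum,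
    Polynomial.eval_mul, Polynomial.eval_pow, Polynomial.eval_neg, Polynomial.eval_one,
    Multiset.card_map, Finset.card_val, Finset.card_univ, Fintype.card_fin] at vieta
  rw [Multiset.prod_eq_zero (Multiset.mem_map.2 ⟨i, Finset.mem_univ _, sub_self _⟩)] at vieta
  rw [vieta]
  refine Finset.sum_congr rfl fun k _ => ?_
  rw [elemSymm_eq_esymm]
  ring

theorem elemSymm_zero : elemSymm μ 0 = 1 := by
  simp [elemSymm, Subsingleton.strictMono]

theorem sum_alternating_elemSymm_succ (i : Fin M) :
    ∑ b ∈ Finset.range M, (-1) ^ b * μ i ^ (M - b) * elemSymm μ (b + 1) = μ i ^ (M + 1) := by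
  have h := sum_alternating_elemSymm μ i
  rw [Finset.sum_range_succ', elemSymm_zero, Nat.sub_zero] at h
  calc ∑ b ∈ Finset.range M, (-1) ^ b * μ i ^ (M - b) * elemSymm μ (b + 1)
      = -μ i * ∑ b ∈ Finset.range M, (-1) ^ (b + 1) * μ i ^ (M - (b + 1)) * elemSymm μ (b + 1) := by
        rw [Finset.mul_sum]
        refine Finset.sum_congr rfl fun b hb => ?_
        rw [show M - b = M - (b + 1) + 1 by grind]
        ring
    _ = μ i ^ (M + 1) := by linear_combination -μ i * h

theorem sum_alternating_hookSchur (i : Fin M) (a : ℕ) :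
    ∑ b ∈ Finset.range M, (-1) ^ b * μ i ^ (M - b) * hookSchur μ a b = μ i ^ (M + 1 + a) := by
  induction a with
  | zero => simpa only [hookSchur_zero_left] using sum_alternating_elemSymm_succ μ i
  | succ a ih =>
    have shifted : ∑ b ∈ Finset.range M, (-1) ^ b * μ i ^ (M - b) * hookSchur μ a (b + 1) =
        μ i ^ (M + 1) * completeSymm μ (a + 1) - μ i * μ i ^ (M + 1 + a) := by
      -- `top` is computed once through `ih` and once by splitting off its `b = 0` term.
      have top : ∑ b ∈ Finset.range (M + 1), (-1) ^ b * μ i ^ (M + 1 - b) * hookSchur μ a b =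
          μ i * μ i ^ (M + 1 + a) := by
        rw [Finset.sum_range_succ, hookSchur_eq_zero μ le_rfl, mul_zero, add_zero, ← ih,
          Finset.mul_sum]
        refine Finset.sum_congr rfl fun b hb => ?_
        rw [show M + 1 - b = M - b + 1 by grind]
        ring
      rw [Finset.sum_range_succ', hookSchur_zero_right, Nat.sub_zero] at top
      have bottom : ∀ b ∈ Finset.range M, (-1) ^ (b + 1) * μ i ^ (M + 1 - (b + 1)) *
          hookSchur μ a (b + 1) = -((-1) ^ b * μ i ^ (M - b) * hookSchur μ a (b + 1)) := by
        intro b _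
        rw [Nat.add_sub_add_right]
        ring
      rw [Finset.sum_congr rfl bottom, Finset.sum_neg_distrib] at top
      linear_combination -top
    have pieri (b : ℕ) : hookSchur μ (a + 1) b =
        completeSymm μ (a + 1) * elemSymm μ (b + 1) - hookSchur μ a (b + 1) := by
      rw [completeSymm_mul_elemSymm]
      ring
    simp only [pieri, mul_sub, Finset.sum_sub_distrib, shifted, mul_left_comm _ (completeSymm μ _),
      ← Finset.mul_sum, sum_alternating_elemSymm_succ μ i]
    ring

end SymmetricFunctions

open Matrix in
theorem hasSum_smul_of_mulVec_eq {ι β K : Type*} [Fintype ι] [DecidableEq ι] [Field K]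
    [TopologicalSpace K] [IsTopologicalRing K] {A : Matrix ι ι K} (hA : IsUnit A.det)
    {u v : β → ι → K} {c : β → K} {s : ι → K} (huv : ∀ k, A *ᵥ u k = v k)
    (hv : HasSum (fun k => c k • v k) s) : HasSum (fun k => c k • u k) (A⁻¹ *ᵥ s) := by
  have hu (k : β) : u k = A⁻¹ *ᵥ v k := by
    rw [← huv, mulVec_mulVec, nonsing_inv_mul _ hA, one_mulVec]
  simpa [hu, Function.comp_def] using
    hv.map A⁻¹.mulVecLin (continuous_const.matrix_mulVec continuous_id)

section Moments
open Matrix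
variable {M : ℕ} (μ : Fin M → ℝ)

noncomputable def moment (n : ℕ) : Fin M → ℝ := fun i => μ i ^ n / n.factorial

noncomputable def momentMatrix : Matrix (Fin M) (Fin M) ℝ := of fun i n => moment μ (n + 1) i

theorem det_momentMatrix_ne_zero (hμ : ∀ i, μ i ≠ 0) (hinj : Function.Injective μ) :
    (momentMatrix μ).det ≠ 0 := by
  have factor : momentMatrix μ = diagonal μ * vandermonde μ *
      diagonal fun n : Fin M => (((n : ℕ) + 1).factorial : ℝ)⁻¹ := by
    ext i n
    simp [momentMatrix, moment, vandermonde, pow_succ', div_eq_mul_inv, mul_assoc]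
  rw [factor, det_mul, det_mul, det_diagonal, det_diagonal]
  simp [Finset.prod_ne_zero_iff, hμ, det_vandermonde_ne_zero_iff.2 hinj, Nat.factorial_ne_zero]

theorem momentMatrix_mulVec_eq_neg_moment {m : ℕ} (hm : M < m) {w : ℕ → ℝ}
    (hw : ∀ n, 1 ≤ n → n ≤ M → w n = (-1 : ℝ) ^ (M - n + 1) *
      ((n.factorial : ℝ) / (m.factorial : ℝ)) * schur M μ ((m - M) :: List.replicate (M - n) 1)) :
    momentMatrix μ *ᵥ (fun n : Fin M => w (n + 1)) = -moment μ m := by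
  obtain ⟨a, rfl⟩ : ∃ a, m = M + 1 + a := ⟨m - M - 1, by omega⟩
  ext i
  simp only [mulVec, dotProduct, momentMatrix, of_apply, Pi.neg_apply, moment]
  rw [Fin.sum_univ_eq_sum_range (fun n => μ i ^ (n + 1) / (n + 1).factorial * w (n + 1)) M,
    ← Finset.sum_range_reflect, ← sum_alternating_hookSchur μ i a, Finset.sum_div,
    ← Finset.sum_neg_distrib]
  refine Finset.sum_congr rfl fun b hb => ?_
  have hb := Finset.mem_range.1 hb
  rw [hw _ (by omega) (by omega), show M - 1 - b + 1 = M - b by omega,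
    show M - (M - b) = b by omega, show M + 1 + a - M = a + 1 by omega, schur_hook]
  field_simp
  ring

theorem hasSum_moment_tail {μmax : ℝ} (hbound : ∀ i, |μ i| ≤ μmax)
    {y : ℕ → ℝ} (hy : Summable fun n : ℕ => μmax ^ (n + 1) * |y (n + 1)| / ((n + 1).factorial : ℝ))
    (hW : ∀ i, ∑' n : ℕ, (μ i ^ (n + 1) / ((n + 1).factorial : ℝ)) * y (n + 1) = 0) :
    HasSum (fun k => y (M + 1 + k) • moment μ (M + 1 + k))
      (-(momentMatrix μ *ᵥ fun n => y (n + 1))) := by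
  refine Pi.hasSum.2 fun i => ?_
  have hs : Summable fun n : ℕ => (μ i ^ (n + 1) / ((n + 1).factorial : ℝ)) * y (n + 1) := by
    refine hy.of_norm_bounded fun n => ?_
    rw [Real.norm_eq_abs, abs_mul, abs_div, abs_pow, Nat.abs_cast, div_mul_eq_mul_div]
    gcongr
    exact hbound i
  have tail := (hasSum_nat_add_iff' M).2 (hW i ▸ hs.hasSum)
  have hterm : (fun n => μ i ^ (n + M + 1) / ((n + M + 1).factorial : ℝ) * y (n + M + 1)) =
      fun k => (y (M + 1 + k) • moment μ (M + 1 + k)) i := by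
    funext k
    rw [show k + M + 1 = M + 1 + k by ring, Pi.smul_apply, smul_eq_mul, moment, mul_comm]
  have hhead : 0 - ∑ n ∈ Finset.range M, μ i ^ (n + 1) / ((n + 1).factorial : ℝ) * y (n + 1) =
      (-(momentMatrix μ *ᵥ fun n => y (n + 1))) i := by
    simp [mulVec, dotProduct, momentMatrix, moment, Fin.sum_univ_eq_sum_range
      (fun n => μ i ^ (n + 1) / ((n + 1).factorial : ℝ) * y (n + 1)) M]
  rwa [hterm, hhead] at tail

end Moments

theorem tsum_mul_eq_of_lt {M : ℕ} {w : ℕ → ℕ → ℝ} (hw_m : ∀ m, M < m → w m m = 1)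
    (hw_zero : ∀ m, M < m → ∀ n, M < n → n ≠ m → w m n = 0) (c : ℕ → ℝ) {n : ℕ} (hn : M < n) :
    ∑' k : ℕ, c (M + 1 + k) * w (M + 1 + k) n = c n := by
  rw [tsum_eq_single (n - M - 1) fun k hk => by rw [hw_zero _ (by omega) n hn (by omega), mul_zero],
    show M + 1 + (n - M - 1) = n by omega, hw_m n hn, mul_one]

theorem basis_expansion_of_W_general (M : ℕ) (μ : Fin M → ℝ)
    (hpos : ∀ i, 0 < μ i) (hinj : Function.Injective μ)
    (μmax : ℝ) (hmax : IsGreatest (Set.range μ) μmax)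
    (w : ℕ → ℕ → ℝ)
    (hw_low : ∀ m, M < m → ∀ n, 1 ≤ n → n ≤ M → w m n =
      (-1 : ℝ) ^ (M - n + 1) * ((n.factorial : ℝ) / (m.factorial : ℝ)) *
        schur M μ ((m - M) :: List.replicate (M - n) 1))
    (hw_m : ∀ m, M < m → w m m = 1)
    (hw_zero : ∀ m, M < m → ∀ n, M < n → n ≠ m → w m n = 0)
    (Δy : ℕ → ℝ)
    (hsummable : Summable fun n : ℕ => μmax ^ (n + 1) * |Δy (n + 1)| / ((n + 1).factorial : ℝ))
    (hW : ∀ i : Fin M,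
      ∑' n : ℕ, (μ i ^ (n + 1) / ((n + 1).factorial : ℝ)) * Δy (n + 1) = 0) :
    (∀ n, 1 ≤ n → Δy n = ∑' k : ℕ, Δy (M + 1 + k) * w (M + 1 + k) n) ∧
    (∀ c : ℕ → ℝ, (∀ n, 1 ≤ n → Δy n = ∑' k : ℕ, c (M + 1 + k) * w (M + 1 + k) n) →
      ∀ m, M < m → c m = Δy m) := by
  have hbound (i : Fin M) : |μ i| ≤ μmax := (abs_of_pos (hpos i)).trans_le (hmax.2 ⟨i, rfl⟩)
  have hdet := (det_momentMatrix_ne_zero μ (fun i => (hpos i).ne') hinj).isUnit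
  have hlow := hasSum_smul_of_mulVec_eq hdet
    (fun k => momentMatrix_mulVec_eq_neg_moment μ (m := M + 1 + k) (by omega) (hw_low _ (by omega)))
    (by simpa only [smul_neg] using (hasSum_moment_tail μ hbound hsummable hW).neg)
  rw [neg_neg, Matrix.mulVec_mulVec, Matrix.nonsing_inv_mul _ hdet, Matrix.one_mulVec] at hlow
  refine ⟨fun n hn => ?_, fun c hc m hm => ?_⟩
  · rcases le_or_gt n M with hnM | hnM
    · obtain ⟨j, rfl⟩ : ∃ j, n = j + 1 := ⟨n - 1, by omega⟩
      exact ((Pi.hasSum.1 hlow ⟨j, by omega⟩).tsum_eq).symm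
    · exact (tsum_mul_eq_of_lt hw_m hw_zero Δy hnM).symm
  · rw [← tsum_mul_eq_of_lt hw_m hw_zero c hm, ← hc m (by omega)]

/-- Every sequence `Δy` in the constraint space `W` (absolutely summable against
`μmax ^ n / n!` and annihilated by all the decoy constraints) is uniquely
expressible as `Δy = ∑_{m > M} Δy m • w^(m)`, where `w^(m)` are the basis
sequences built from hook Schur polynomials. -/
theorem basis_expansion_of_W (M : ℕ) (hM : 0 < M) (μ : Fin M → ℝ)
    (hpos : ∀ i, 0 < μ i) (hinj : Function.Injective μ)
    (μmax : ℝ) (hmax : IsGreatest (Set.range μ) μmax)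
    (w : ℕ → ℕ → ℝ)
    (hw_low : ∀ m, M < m → ∀ n, 1 ≤ n → n ≤ M → w m n =
      (-1 : ℝ) ^ (M - n + 1) * ((n.factorial : ℝ) / (m.factorial : ℝ)) *
        schur M μ ((m - M) :: List.replicate (M - n) 1))
    (hw_m : ∀ m, M < m → w m m = 1)
    (hw_zero : ∀ m, M < m → ∀ n, M < n → n ≠ m → w m n = 0)
    (Δy : ℕ → ℝ)
    (hsummable : Summable fun n : ℕ => μmax ^ (n + 1) * |Δy (n + 1)| / ((n + 1).factorial : ℝ))
    (hW : ∀ i : Fin M,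
      ∑' n : ℕ, (μ i ^ (n + 1) / ((n + 1).factorial : ℝ)) * Δy (n + 1) = 0) :
    (∀ n, 1 ≤ n → Δy n = ∑' k : ℕ, Δy (M + 1 + k) * w (M + 1 + k) n) ∧
    (∀ c : ℕ → ℝ, (∀ n, 1 ≤ n → Δy n = ∑' k : ℕ, c (M + 1 + k) * w (M + 1 + k) n) →
      ∀ m, M < m → c m = Δy m) :=
  basis_expansion_of_W_general M μ hpos hinj μmax hmax w hw_low hw_m hw_zero Δy hsummable hW
end

section
/- Let μ_1,...,μ_M be distinct positive reals and let (y_n)_{n≥1} with 0 ≤ y_n satisfy Q_+(μ_i) = e^{−μ_i} ∑_{n=1}^∞ (μ_i^n/n!) y_n for each i. Let (X_n)_{1≤n≤M} be the unique solution of the linear system ∑_{n=1}^M (μ_i^n/n!) X_n = e^{μ_i} Q_+(μ_i), i = 1,...,M. If M is even, then y_1 ≥ X_1. -/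
/-!
Write `ℓ i` for the value at `0` of the `i`-th Lagrange basis polynomial of the nodes `μ`, so that
`∑ᵢ ℓ i * p (μ i) = p 0` whenever `deg p < M`. Pairing both linear systems with the weights
`ℓ i / μ i` therefore isolates the first unknown, and leaves
`X₁ = y₁ + ∑_{n ≥ M} (∑ᵢ ℓ i * μ i ^ n) * y (n + 1) / (n + 1)!`.
For `n ≥ 1`, `∑ᵢ ℓ i * μ i ^ n` is the value at `0` of the remainder of `Xⁿ` modulo the nodal
polynomial `∏ᵢ (X - μ i)`, namely `-(∏ᵢ (-μ i)) * q 0` with `q` the quotient. For `M` even the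
product is positive, and `q`, a composite of divisions by the `X - μ i` with `μ i ≥ 0`, has
nonnegative coefficients; so every tail term is `≤ 0`.
-/

open Polynomial Finset

namespace Polynomial

theorem divByMonic_divByMonic {R : Type*} [CommRing R] (f : R[X]) {p q : R[X]}
    (hp : p.Monic) (hq : q.Monic) : f /ₘ p /ₘ q = f /ₘ (p * q) := by
  nontriviality R
  refine ((div_modByMonic_unique (f /ₘ p /ₘ q) (p * (f /ₘ p %ₘ q) + f %ₘ p)
    (hp.mul hq) ⟨?_, ?_⟩).1).symm
  · calc p * (f /ₘ p %ₘ q) + f %ₘ p + p * q * (f /ₘ p /ₘ q)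
        = f %ₘ p + p * (f /ₘ p %ₘ q + q * (f /ₘ p /ₘ q)) := by ring
      _ = f := by rw [modByMonic_add_div, modByMonic_add_div]
  · have hp_bot : p.degree ≠ ⊥ := degree_ne_bot.2 hp.ne_zero
    have hq_nonneg : 0 ≤ q.degree := zero_le_degree_iff.2 hq.ne_zero
    rw [hq.degree_mul]
    refine (degree_add_le _ _).trans_lt (max_lt ?_ ?_)
    · exact (degree_mul_le _ _).trans_lt
        (WithBot.add_lt_add_left hp_bot (degree_modByMonic_lt _ hq))
    · exact (degree_modByMonic_lt f hp).trans_le (le_add_of_nonneg_right hq_nonneg)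

variable {R : Type*} [CommRing R] [PartialOrder R] [IsOrderedRing R]

theorem coeff_divByMonic_X_sub_C_nonneg {f : R[X]} (hf : ∀ n, 0 ≤ f.coeff n) {a : R}
    (ha : 0 ≤ a) (n : ℕ) : 0 ≤ (f /ₘ (X - C a)).coeff n := by
  rw [coeff_divByMonic_X_sub_C]
  exact sum_nonneg fun i _ => mul_nonneg (pow_nonneg ha _) (hf i)

end Polynomial

namespace Lagrange

section OrderedRing

variable {R ι : Type*} [CommRing R] [PartialOrder R] [IsOrderedRing R]

theorem coeff_divByMonic_nodal_nonneg [DecidableEq ι] {s : Finset ι} {v : ι → R}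
    (hv : ∀ i ∈ s, 0 ≤ v i) {f : R[X]} (hf : ∀ n, 0 ≤ f.coeff n) (n : ℕ) :
    0 ≤ (f /ₘ nodal s v).coeff n := by
  induction s using Finset.induction generalizing f n with
  | empty => simpa [nodal_empty] using hf n
  | insert a s ha ih =>
    rw [nodal_insert_eq_nodal ha, ← divByMonic_divByMonic _ (monic_X_sub_C _) nodal_monic]
    exact ih (fun i hi => hv i (mem_insert_of_mem hi))
      (coeff_divByMonic_X_sub_C_nonneg hf (hv a (mem_insert_self a s))) n

end OrderedRing

variable {F ι : Type*} [Field F] [DecidableEq ι] {s : Finset ι} {v : ι → F}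

theorem sum_eval_basis_mul_pow (hvs : Set.InjOn v s) (x : F) (N : ℕ) :
    ∑ i ∈ s, (Lagrange.basis s v i).eval x * v i ^ N
      = x ^ N - (nodal s v).eval x * (X ^ N /ₘ nodal s v).eval x := by
  have hrem : X ^ N %ₘ nodal s v = interpolate s v (fun i => v i ^ N) := by
    refine eq_interpolate_of_eval_eq _ hvs ?_ fun i hi => ?_
    · simpa [degree_nodal] using degree_modByMonic_lt (X ^ N) (nodal_monic (s := s) (v := v))
    · simp [modByMonic_eq_sub_mul_div, eval_nodal_at_node hi]
  have := congrArg (eval x) hrem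
  rw [modByMonic_eq_sub_mul_div, interpolate_apply] at this
  simpa [eval_finsetSum, mul_comm, eq_comm] using this

theorem sum_eval_basis_mul_pow_of_lt (hvs : Set.InjOn v s) (x : F) {N : ℕ} (hN : N < #s) :
    ∑ i ∈ s, (Lagrange.basis s v i).eval x * v i ^ N = x ^ N := by
  have hdeg : (X ^ N : F[X]).degree < (nodal s v).degree := by
    rw [degree_X_pow, degree_nodal]
    exact_mod_cast hN
  rw [sum_eval_basis_mul_pow hvs, (divByMonic_eq_zero_iff nodal_monic).2 hdeg, eval_zero,
    mul_zero, sub_zero]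

theorem sum_eval_basis_zero_mul_pow_nonpos [LinearOrder F] [IsStrictOrderedRing F]
    (hvs : Set.InjOn v s) (hs : Even #s) (hv : ∀ i ∈ s, 0 ≤ v i) {N : ℕ} (hN : N ≠ 0) :
    ∑ i ∈ s, (Lagrange.basis s v i).eval 0 * v i ^ N ≤ 0 := by
  rw [sum_eval_basis_mul_pow hvs, zero_pow hN, zero_sub, neg_nonpos]
  have hnodal : 0 ≤ (nodal s v).eval 0 := by
    rw [eval_nodal]
    simp_rw [zero_sub]
    rw [prod_neg, hs.neg_one_pow, one_mul]
    exact prod_nonneg hv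
  have hquot : 0 ≤ (X ^ N /ₘ nodal s v).eval 0 := by
    rw [← coeff_zero_eq_eval_zero]
    refine coeff_divByMonic_nodal_nonneg hv (fun n => ?_) 0
    rw [coeff_X_pow]
    positivity
  exact mul_nonneg hnodal hquot

end Lagrange

theorem le_of_hasSum_of_moment_weights {ι : Type*} [Fintype ι] {M : ℕ} (φ : ι → ℕ → ℝ)
    (w : ι → ℝ) (a : ℕ → ℝ) (b : Fin M → ℝ) (k : Fin M)
    (hab : ∀ i, HasSum (fun n => φ i n * a n) (∑ n : Fin M, φ i n * b n))
    (hlow : ∀ n : Fin M, ∑ i, w i * φ i n = if n = k then 1 else 0)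
    (hhigh : ∀ n, M ≤ n → ∑ i, w i * φ i n ≤ 0) (ha : ∀ n, M ≤ n → 0 ≤ a n) :
    b k ≤ a k := by
  have hweighted : HasSum (fun n => (∑ i, w i * φ i n) * a n)
      (∑ i, w i * ∑ n : Fin M, φ i n * b n) := by
    simpa only [sum_mul, mul_assoc] using hasSum_sum fun i _ => (hab i).mul_left (w i)
  have hvalue : ∑ i, w i * ∑ n : Fin M, φ i n * b n = b k := by
    simp only [mul_sum, ← mul_assoc]
    rw [sum_comm]
    simp [← sum_mul, hlow]
  refine hasSum_le (fun n => ?_) (hvalue ▸ hweighted) (hasSum_ite_eq (k : ℕ) (a k))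
  rcases lt_or_ge n M with hn | hn
  · lift n to Fin M using hn
    simp only [hlow, Fin.val_inj]
    split_ifs with hnk
    · rw [hnk, one_mul]
    · rw [zero_mul]
  · rw [if_neg (by omega)]
    exact mul_nonpos_of_nonpos_of_nonneg (hhigh n hn) (ha n hn)

/-- Decoy-state method, `M` even: if the nonnegative yields `(y n)_{n≥1}` reproduce
the observed rates `Q₊(μ i)` and `(X n)_{n=1}^M` is the solution of the truncated
linear system, then `X 1` is a lower bound on `y 1`. -/
theorem X_one_le_y_one_of_even (M : ℕ) (hM : 0 < M) (hMeven : Even M)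
    (μ : Fin M → ℝ) (hpos : ∀ i, 0 < μ i) (hinj : Function.Injective μ)
    (y : ℕ → ℝ) (hy : ∀ n, 1 ≤ n → 0 ≤ y n)
    (Qp : Fin M → ℝ)
    (hsum : ∀ i : Fin M, Summable fun n : ℕ => μ i ^ (n + 1) / ((n + 1).factorial : ℝ) * y (n + 1))
    (hQ : ∀ i : Fin M, Qp i =
      Real.exp (-μ i) * ∑' n : ℕ, μ i ^ (n + 1) / ((n + 1).factorial : ℝ) * y (n + 1))
    (X : Fin M → ℝ)
    (hX : ∀ i : Fin M,
      ∑ n : Fin M, μ i ^ ((n : ℕ) + 1) / (((n : ℕ) + 1).factorial : ℝ) * X n =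
        Real.exp (μ i) * Qp i) :
    X ⟨0, hM⟩ ≤ y 1 := by
  set ℓ : Fin M → ℝ := fun i => (Lagrange.basis univ μ i).eval 0
  have hmoment : ∀ n : ℕ, ∑ i, ℓ i / μ i * (μ i ^ (n + 1) / ((n + 1).factorial : ℝ))
      = (∑ i, ℓ i * μ i ^ n) / ((n + 1).factorial : ℝ) := by
    intro n
    rw [sum_div]
    refine sum_congr rfl fun i _ => ?_
    field_simp [(hpos i).ne']
    ring
  refine le_of_hasSum_of_moment_weights (fun i n => μ i ^ (n + 1) / ((n + 1).factorial : ℝ))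
    (fun i => ℓ i / μ i) (fun n => y (n + 1)) X ⟨0, hM⟩ (fun i => ?_) (fun n => ?_)
    (fun n hn => ?_) (fun n _ => hy _ n.succ_pos)
  · rw [hX, hQ, ← mul_assoc, ← Real.exp_add, add_neg_cancel, Real.exp_zero, one_mul]
    exact (hsum i).hasSum
  · rw [hmoment, Lagrange.sum_eval_basis_mul_pow_of_lt hinj.injOn 0 (by simp)]
    rcases n with ⟨_ | n, hn⟩ <;> simp
  · rw [hmoment]
    refine div_nonpos_of_nonpos_of_nonneg ?_ (Nat.cast_nonneg _)
    exact Lagrange.sum_eval_basis_zero_mul_pow_nonpos hinj.injOn (by simpa using hMeven)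
      (fun i _ => (hpos i).le) (by omega)
end

section
/- Under the same setup, for any M and any 1 ≤ n ≤ M: if M − n is odd then y_n ≥ X_n, and if M − n is even then y_n ≤ X_n, for every nonnegative solution (y_k) of the constraints with y_k ≤ 1 for all k. -/
/-!
Put `b_j = (y_{j+1} - X_{j+1}) / (j+1)!` with `X_k = 0` for `k > M`. The decoy constraints say
that the entire function `F(x) = Σ b_j x ^ j` vanishes at the `M` distinct positive `μ_i`, and
`b_j ≥ 0` for `j ≥ M`. A rule of signs of Descartes type then gives `(-1) ^ (M + j) b_j ≥ 0`
for `j < M`: the operator `F ↦ x ^ (t + 1) (x ^ (-t) F)'` multiplies `b_j` by `j - t` and, by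
Rolle, loses at most one positive zero. With `t = M - 1` it flips the signs of the
coefficients below `M - 1`, which gives the induction step; at the bottom, a function whose
coefficients are nonnegative from degree `m` on and which has `m + 1` positive zeros vanishes.
-/

open scoped Nat

theorem exists_strictMono_zeros_of_hasDerivAt {f f' : ℝ → ℝ} {s : Set ℝ} (hs : s.OrdConnected)
    (hf : ∀ x ∈ s, HasDerivAt f (f' x) x) {m : ℕ} {ρ : Fin (m + 1) → ℝ} (hρ : StrictMono ρ)
    (hρs : ∀ i, ρ i ∈ s) (hz : ∀ i, f (ρ i) = 0) :
    ∃ ξ : Fin m → ℝ, StrictMono ξ ∧ (∀ i, ξ i ∈ s) ∧ ∀ i, f' (ξ i) = 0 := by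
  have hIcc (i : Fin m) : Set.Icc (ρ i.castSucc) (ρ i.succ) ⊆ s := hs.out (hρs _) (hρs _)
  have hrolle (i : Fin m) : ∃ ξ ∈ Set.Ioo (ρ i.castSucc) (ρ i.succ), f' ξ = 0 :=
    exists_hasDerivAt_eq_zero (hρ i.castSucc_lt_succ)
      (fun x hx => (hf x (hIcc i hx)).continuousAt.continuousWithinAt)
      ((hz _).trans (hz _).symm) (fun x hx => hf x (hIcc i (Set.Ioo_subset_Icc_self hx)))
  choose ξ hξ hξ0 using hrolle
  refine ⟨ξ, fun i j hij => ?_, fun i => hIcc i (Set.Ioo_subset_Icc_self (hξ i)), hξ0⟩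
  calc ξ i < ρ i.succ := (hξ i).2
    _ ≤ ρ j.castSucc := hρ.monotone (Fin.succ_le_castSucc_iff.2 hij)
    _ < ξ j := (hξ j).1

noncomputable def evalSeries (b : ℕ → ℝ) (x : ℝ) : ℝ := ∑' j, b j * x ^ j

def ExpTypeCoeffs (b : ℕ → ℝ) : Prop :=
  ∃ C q : ℝ, 0 ≤ C ∧ 0 ≤ q ∧ ∀ j, |b j| ≤ C * q ^ j / j !

theorem expTypeCoeffs_div_factorial_succ {a : ℕ → ℝ} {C : ℝ} (h : ∀ j, |a j| ≤ C) :
    ExpTypeCoeffs fun j => a j / (j + 1)! := by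
  refine ⟨C, 1, (abs_nonneg _).trans (h 0), zero_le_one, fun j => ?_⟩
  rw [abs_div, Nat.abs_cast, one_pow, mul_one]
  exact div_le_div₀ ((abs_nonneg _).trans (h 0)) (h j) (by positivity)
    (mod_cast Nat.factorial_le j.le_succ)

namespace ExpTypeCoeffs

variable {b : ℕ → ℝ}

theorem summable (hb : ExpTypeCoeffs b) (x : ℝ) : Summable fun j => b j * x ^ j := by
  obtain ⟨C, q, -, -, h⟩ := hb
  refine ((Real.summable_pow_div_factorial (q * |x|)).mul_left C).of_norm_bounded fun j => ?_
  rw [norm_mul, norm_pow, Real.norm_eq_abs, Real.norm_eq_abs]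
  calc |b j| * |x| ^ j ≤ C * q ^ j / j ! * |x| ^ j := by gcongr; exact h j
    _ = C * ((q * |x|) ^ j / j !) := by ring

theorem mul_sub_natCast (hb : ExpTypeCoeffs b) (t : ℕ) :
    ExpTypeCoeffs fun j => ((j : ℝ) - t) * b j := by
  obtain ⟨C, q, hC, hq, h⟩ := hb
  refine ⟨C * (1 + t), 2 * q, by positivity, by positivity, fun j => ?_⟩
  have hj : (j : ℝ) ≤ 2 ^ j := mod_cast Nat.lt_two_pow_self.le
  have h1 : (1 : ℝ) ≤ 2 ^ j := one_le_pow₀ one_le_two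
  have hjt : |(j : ℝ) - t| ≤ (1 + t) * 2 ^ j := by
    rw [abs_sub_le_iff]
    constructor <;> nlinarith [(Nat.cast_nonneg t : (0 : ℝ) ≤ t)]
  calc |((j : ℝ) - t) * b j| = |(j : ℝ) - t| * |b j| := abs_mul _ _
    _ ≤ (1 + t) * 2 ^ j * (C * q ^ j / j !) := by gcongr; exact h j
    _ = C * (1 + t) * (2 * q) ^ j / j ! := by ring

theorem exists_summable_bound_deriv (hb : ExpTypeCoeffs b) (R : ℝ) :
    ∃ u : ℕ → ℝ, Summable u ∧ ∀ (j : ℕ) (y : ℝ), |y| < R → ‖(j : ℝ) * b j * y ^ (j - 1)‖ ≤ u j := by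
  obtain ⟨C, q, hC, hq, h⟩ := hb
  set R' := max R 1
  refine ⟨fun j => C * ((2 * q * R') ^ j / j !),
    (Real.summable_pow_div_factorial _).mul_left C, fun j y hy => ?_⟩
  have hj : (j : ℝ) ≤ 2 ^ j := mod_cast Nat.lt_two_pow_self.le
  have hyR : |y| ^ (j - 1) ≤ R' ^ j :=
    (pow_le_pow_left₀ (abs_nonneg y) (hy.le.trans (le_max_left R 1)) _).trans
      (pow_le_pow_right₀ (le_max_right R 1) (Nat.sub_le j 1))
  rw [norm_mul, norm_mul, norm_pow, Real.norm_eq_abs, Real.norm_eq_abs, Real.norm_eq_abs,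
    Nat.abs_cast]
  calc (j : ℝ) * |b j| * |y| ^ (j - 1) ≤ 2 ^ j * (C * q ^ j / j !) * R' ^ j := by
        gcongr; exact h j
    _ = C * ((2 * q * R') ^ j / j !) := by ring

theorem hasDerivAt_evalSeries (hb : ExpTypeCoeffs b) (x : ℝ) :
    HasDerivAt (evalSeries b) (∑' j : ℕ, (j : ℝ) * b j * x ^ (j - 1)) x := by
  obtain ⟨u, hu, hbound⟩ := hb.exists_summable_bound_deriv (|x| + 1)
  refine hasDerivAt_tsum_of_isPreconnected hu Metric.isOpen_ball
    (convex_ball (0 : ℝ) (|x| + 1)).isPreconnected (fun j y _ => ?_) (fun j y hy => hbound j y ?_)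
    (Metric.mem_ball_self (by positivity)) (hb.summable 0) (by simp)
  · simpa [mul_comm, mul_assoc, mul_left_comm] using (hasDerivAt_pow j y).const_mul (b j)
  · simpa using hy

theorem evalSeries_mul_sub_natCast (hb : ExpTypeCoeffs b) (t : ℕ) (x : ℝ) :
    evalSeries (fun j => ((j : ℝ) - t) * b j) x =
      x * ∑' j : ℕ, (j : ℝ) * b j * x ^ (j - 1) - t * evalSeries b x := by
  have hx : x * ∑' j : ℕ, (j : ℝ) * b j * x ^ (j - 1) = ∑' j : ℕ, (j : ℝ) * b j * x ^ j := by
    rw [← tsum_mul_left]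
    refine tsum_congr fun j => ?_
    rcases j with _ | j
    · simp
    · simp only [Nat.add_sub_cancel, pow_succ]; ring
  have hj : Summable fun j : ℕ => (j : ℝ) * b j * x ^ j := by
    simpa using (hb.mul_sub_natCast 0).summable x
  rw [hx, evalSeries, evalSeries, ← tsum_mul_left, ← hj.tsum_sub ((hb.summable x).mul_left _)]
  exact tsum_congr fun j => by ring

theorem hasDerivAt_zpow_mul_evalSeries (hb : ExpTypeCoeffs b) (t : ℕ) {x : ℝ} (hx : x ≠ 0) :
    HasDerivAt (fun y => y ^ (-(t : ℤ)) * evalSeries b y)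
      (x ^ (-(t : ℤ) - 1) * evalSeries (fun j => ((j : ℝ) - t) * b j) x) x := by
  refine ((hasDerivAt_zpow (-(t : ℤ)) x (Or.inl hx)).mul
    (hb.hasDerivAt_evalSeries x)).congr_deriv ?_
  have hpow : x ^ (-(t : ℤ)) = x * x ^ (-(t : ℤ) - 1) := by
    rw [← zpow_one_add₀ hx, add_sub_cancel]
  rw [hb.evalSeries_mul_sub_natCast, hpow]
  push_cast
  ring

theorem exists_zeros_mul_sub_natCast (hb : ExpTypeCoeffs b) (t : ℕ) {m : ℕ}
    {ρ : Fin (m + 1) → ℝ} (hρ : StrictMono ρ) (hpos : ∀ i, 0 < ρ i)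
    (hz : ∀ i, evalSeries b (ρ i) = 0) :
    ∃ ξ : Fin m → ℝ, StrictMono ξ ∧ (∀ i, 0 < ξ i) ∧
      ∀ i, evalSeries (fun j => ((j : ℝ) - t) * b j) (ξ i) = 0 := by
  obtain ⟨ξ, hξ, hξpos, hξz⟩ := exists_strictMono_zeros_of_hasDerivAt Set.ordConnected_Ioi
    (fun x hx => hb.hasDerivAt_zpow_mul_evalSeries t (ne_of_gt hx)) hρ hpos
    (fun i => by simp [hz i])
  exact ⟨ξ, hξ, hξpos, fun i =>
    (mul_eq_zero.1 (hξz i)).resolve_left (zpow_ne_zero _ (ne_of_gt (hξpos i)))⟩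

end ExpTypeCoeffs

theorem mul_sub_natCast_nonneg {b : ℕ → ℝ} {t : ℕ} (htail : ∀ j, t < j → 0 ≤ b j) (j : ℕ)
    (hj : t ≤ j) : 0 ≤ ((j : ℝ) - t) * b j := by
  rcases hj.eq_or_lt with rfl | hlt
  · simp
  · exact mul_nonneg (sub_nonneg.2 (mod_cast hlt.le)) (htail j hlt)

theorem ExpTypeCoeffs.eq_zero_of_nonneg_of_zeros {m : ℕ} {b : ℕ → ℝ} (hb : ExpTypeCoeffs b)
    (hnonneg : ∀ j, m ≤ j → 0 ≤ b j) {ρ : Fin (m + 1) → ℝ} (hρ : StrictMono ρ)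
    (hpos : ∀ i, 0 < ρ i) (hz : ∀ i, evalSeries b (ρ i) = 0) : b = 0 := by
  induction m generalizing b with
  | zero =>
    have hterm : ∀ j, 0 ≤ b j * ρ 0 ^ j :=
      fun j => mul_nonneg (hnonneg j j.zero_le) (pow_nonneg (hpos 0).le j)
    have hsum := (hb.summable (ρ 0)).hasSum
    rw [← evalSeries, hz 0, hasSum_zero_iff_of_nonneg hterm] at hsum
    exact funext fun j =>
      (mul_eq_zero.1 (congrFun hsum j)).resolve_right (pow_ne_zero _ (hpos 0).ne')
  | succ m ih =>
    obtain ⟨ξ, hξ, hξpos, hξz⟩ := hb.exists_zeros_mul_sub_natCast m hρ hpos hz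
    have hc := ih (hb.mul_sub_natCast m)
      (mul_sub_natCast_nonneg fun j hj => hnonneg j hj) hξ hξpos hξz
    have hoff : ∀ j, j ≠ m → b j = 0 := fun j hj =>
      (mul_eq_zero.1 (congrFun hc j)).resolve_left (sub_ne_zero.2 (mod_cast hj))
    have hm : b m * ρ 0 ^ m = 0 := by
      rw [← hz 0, evalSeries, tsum_eq_single m fun j hj => by rw [hoff j hj, zero_mul]]
    funext j
    rcases eq_or_ne j m with rfl | hj
    · exact (mul_eq_zero.1 hm).resolve_right (pow_ne_zero _ (hpos 0).ne')
    · exact hoff j hj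

theorem ExpTypeCoeffs.neg_one_pow_mul_nonneg_of_zeros {M n : ℕ} (hn : n < M) {b : ℕ → ℝ}
    (hb : ExpTypeCoeffs b) (hnonneg : ∀ j, M ≤ j → 0 ≤ b j) {ρ : Fin M → ℝ}
    (hρ : StrictMono ρ) (hpos : ∀ i, 0 < ρ i) (hz : ∀ i, evalSeries b (ρ i) = 0) :
    0 ≤ (-1) ^ (M + n) * b n := by
  induction M generalizing b with
  | zero => exact absurd hn n.not_lt_zero
  | succ M ih =>
    rcases Nat.lt_succ_iff_lt_or_eq.1 hn with hn | rfl
    · obtain ⟨ξ, hξ, hξpos, hξz⟩ := hb.exists_zeros_mul_sub_natCast M hρ hpos hz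
      have h := ih hn (hb.mul_sub_natCast M)
        (mul_sub_natCast_nonneg fun j hj => hnonneg j hj) hξ hξpos hξz
      have hMn : (0 : ℝ) < M - n := sub_pos.2 (mod_cast hn)
      exact nonneg_of_mul_nonneg_right (h.trans_eq (by ring)) hMn
    · rw [show n + 1 + n = 2 * n + 1 by ring, pow_succ, pow_mul]
      by_contra! h
      have hbn : 0 < b n := by simpa using h
      have := congrFun (hb.eq_zero_of_nonneg_of_zeros (fun j hj => ?_) hρ hpos hz) n
      · exact hbn.ne' this
      · rcases hj.eq_or_lt with rfl | hlt
        exacts [hbn.le, hnonneg j hlt]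

/-- `x * evalSeries (decoyCoeffs X y) x = Σ_{k ≥ 1} x ^ k / k! * (y k - X_k)`, where
`X_k = X (k - 1)` for `k ≤ M` and `X_k = 0` beyond. -/
noncomputable def decoyCoeffs {M : ℕ} (X : Fin M → ℝ) (y : ℕ → ℝ) (j : ℕ) : ℝ :=
  (y (j + 1) - if h : j < M then X ⟨j, h⟩ else 0) / (j + 1)!

section decoyCoeffs

variable {M : ℕ} (X : Fin M → ℝ) (y : ℕ → ℝ)

theorem decoyCoeffs_val (n : Fin M) :
    decoyCoeffs X y n = (y (n + 1) - X n) / ((n : ℕ) + 1)! := by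
  simp [decoyCoeffs]

theorem decoyCoeffs_of_le {j : ℕ} (hj : M ≤ j) : decoyCoeffs X y j = y (j + 1) / (j + 1)! := by
  simp [decoyCoeffs, not_lt.2 hj]

theorem expTypeCoeffs_decoyCoeffs {C : ℝ} (hy : ∀ j, |y (j + 1)| ≤ C) :
    ExpTypeCoeffs (decoyCoeffs X y) := by
  refine expTypeCoeffs_div_factorial_succ (C := C + ∑ i, |X i|) fun j => ?_
  refine (abs_sub _ _).trans (add_le_add (hy j) ?_)
  split_ifs with h
  · exact Finset.single_le_sum (f := fun i => |X i|) (fun i _ => abs_nonneg _)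
      (Finset.mem_univ (⟨j, h⟩ : Fin M))
  · simpa using Finset.sum_nonneg fun i _ => abs_nonneg (X i)

theorem evalSeries_decoyCoeffs_eq_zero {x : ℝ} (hx : x ≠ 0)
    (hsum : Summable fun j : ℕ => x ^ (j + 1) / (j + 1)! * y (j + 1))
    (heq : ∑' j : ℕ, x ^ (j + 1) / (j + 1)! * y (j + 1) =
      ∑ n : Fin M, x ^ ((n : ℕ) + 1) / ((n : ℕ) + 1)! * X n) :
    evalSeries (decoyCoeffs X y) x = 0 := by
  set Xterm : ℕ → ℝ := fun j => x ^ (j + 1) / (j + 1)! * if h : j < M then X ⟨j, h⟩ else 0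
  have hXterm : ∀ j ∉ Finset.range M, Xterm j = 0 := fun j hj => by
    simp [Xterm, Finset.mem_range.not.1 hj]
  have hXsum : ∑' j, Xterm j = ∑ n : Fin M, x ^ ((n : ℕ) + 1) / ((n : ℕ) + 1)! * X n := by
    rw [tsum_eq_sum hXterm, Finset.sum_range]
    simp [Xterm]
  have hmul : x * evalSeries (decoyCoeffs X y) x =
      ∑' j : ℕ, (x ^ (j + 1) / (j + 1)! * y (j + 1) - Xterm j) := by
    rw [evalSeries, ← tsum_mul_left]
    refine tsum_congr fun j => ?_
    simp only [decoyCoeffs, Xterm, pow_succ]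
    ring
  rw [hsum.tsum_sub (summable_of_ne_finset_zero hXterm), heq, hXsum, sub_self] at hmul
  exact (mul_eq_zero.1 hmul).resolve_left hx

end decoyCoeffs

theorem X_bounds_y_general (M : ℕ)
    (μ : Fin M → ℝ) (hpos : ∀ i, 0 < μ i) (hinj : Function.Injective μ)
    (y : ℕ → ℝ) (hy : ∀ n, 1 ≤ n → 0 ≤ y n ∧ y n ≤ 1)
    (Qp : Fin M → ℝ)
    (hsum : ∀ i : Fin M, Summable fun n : ℕ => μ i ^ (n + 1) / ((n + 1).factorial : ℝ) * y (n + 1))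
    (hQ : ∀ i : Fin M,
      ∑' n : ℕ, μ i ^ (n + 1) / ((n + 1).factorial : ℝ) * y (n + 1) =
        Real.exp (μ i) * Qp i)
    (X : Fin M → ℝ)
    (hX : ∀ i : Fin M,
      ∑ n : Fin M, μ i ^ ((n : ℕ) + 1) / (((n : ℕ) + 1).factorial : ℝ) * X n =
        Real.exp (μ i) * Qp i) :
    ∀ n : Fin M,
      (Odd (M - ((n : ℕ) + 1)) → X n ≤ y ((n : ℕ) + 1)) ∧
      (Even (M - ((n : ℕ) + 1)) → y ((n : ℕ) + 1) ≤ X n) := by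
  have hb : ExpTypeCoeffs (decoyCoeffs X y) := expTypeCoeffs_decoyCoeffs X y fun j =>
    abs_le.2 ⟨by linarith [(hy (j + 1) j.succ_pos).1], (hy (j + 1) j.succ_pos).2⟩
  have hnonneg (j : ℕ) (hj : M ≤ j) : 0 ≤ decoyCoeffs X y j := by
    rw [decoyCoeffs_of_le X y hj]
    exact div_nonneg (hy (j + 1) j.succ_pos).1 (by positivity)
  have hz (i : Fin M) : evalSeries (decoyCoeffs X y) (μ i) = 0 :=
    evalSeries_decoyCoeffs_eq_zero X y (hpos i).ne' (hsum i) ((hQ i).trans (hX i).symm)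
  have hsorted : StrictMono (μ ∘ Tuple.sort μ) :=
    (Tuple.monotone_sort μ).strictMono_of_injective (hinj.comp (Tuple.sort μ).injective)
  intro n
  have hsign := hb.neg_one_pow_mul_nonneg_of_zeros n.isLt hnonneg hsorted (fun i => hpos _)
    (fun i => hz _)
  rw [decoyCoeffs_val, ← mul_div_assoc, le_div_iff₀ (by positivity), zero_mul] at hsign
  have hpow : (-1 : ℝ) ^ (M + n) = -(-1) ^ (M - (n + 1)) := by
    rw [show M + n = M - (n + 1) + (2 * n + 1) by omega, pow_add, pow_succ, pow_mul]
    norm_num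
  rw [hpow] at hsign
  constructor
  · intro hodd
    rw [hodd.neg_one_pow] at hsign
    linarith
  · intro heven
    rw [heven.neg_one_pow] at hsign
    linarith

/-- Decoy-state method, general parity statement: for every `1 ≤ n ≤ M`, if `M - n`
is odd then `X n ≤ y n`, and if `M - n` is even then `y n ≤ X n`, for every solution
`(y k)` with `0 ≤ y k ≤ 1` of the decoy constraints. -/
theorem X_bounds_y (M : ℕ) (hM : 0 < M)
    (μ : Fin M → ℝ) (hpos : ∀ i, 0 < μ i) (hinj : Function.Injective μ)
    (y : ℕ → ℝ) (hy : ∀ n, 1 ≤ n → 0 ≤ y n ∧ y n ≤ 1)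
    (Qp : Fin M → ℝ)
    (hsum : ∀ i : Fin M, Summable fun n : ℕ => μ i ^ (n + 1) / ((n + 1).factorial : ℝ) * y (n + 1))
    (hQ : ∀ i : Fin M,
      ∑' n : ℕ, μ i ^ (n + 1) / ((n + 1).factorial : ℝ) * y (n + 1) =
        Real.exp (μ i) * Qp i)
    (X : Fin M → ℝ)
    (hX : ∀ i : Fin M,
      ∑ n : Fin M, μ i ^ ((n : ℕ) + 1) / (((n : ℕ) + 1).factorial : ℝ) * X n =
        Real.exp (μ i) * Qp i) :
    ∀ n : Fin M,
      (Odd (M - ((n : ℕ) + 1)) → X n ≤ y ((n : ℕ) + 1)) ∧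
      (Even (M - ((n : ℕ) + 1)) → y ((n : ℕ) + 1) ≤ X n) :=
  X_bounds_y_general M μ hpos hinj y hy Qp hsum hQ X hX
end

section
/- The solution X_1 of the truncated system admits the closed form X_1 = ∑_{i=1}^M (e^{μ_i} Q_+(μ_i)/μ_i) ∏_{j≠i} μ_j/(μ_j − μ_i). -/
/-!
Index from `0`, so that the paper's `X_1` is `X 0`. Put `c n = X n / (n + 1)!` and
`p = ∑ n < M, c n Xⁿ`, a polynomial of degree `< M`. The `i`-th equation of the system says
`μ i * p (μ i) = e^{μ i} Q₊(μ i)`, so `p` takes known values at the `M` distinct nodes `μ i` and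
is therefore its own Lagrange interpolant. Evaluating that interpolant at `0` gives the formula,
since `X 0 = c 0 = p 0`.
-/

open Polynomial Finset

namespace Lagrange

variable {F ι : Type*} [Field F] [DecidableEq ι] {s : Finset ι} {v : ι → F}

theorem eval_eq_sum_mul_prod (hvs : Set.InjOn v s) {p : F[X]} (hp : p.degree < #s) (x : F) :
    p.eval x = ∑ i ∈ s, p.eval (v i) * ∏ j ∈ s.erase i, (x - v j) / (v i - v j) := by
  conv_lhs => rw [eq_interpolate hvs hp]
  simp only [interpolate_apply, eval_finsetSum, eval_mul, eval_C, Lagrange.basis, eval_prod,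
    basisDivisor, eval_sub, eval_X]
  refine sum_congr rfl fun i _ => congrArg _ (prod_congr rfl fun j _ => ?_)
  rw [div_eq_inv_mul]

theorem eval_zero_eq_sum_mul_prod (hvs : Set.InjOn v s) {p : F[X]} (hp : p.degree < #s) :
    p.eval 0 = ∑ i ∈ s, p.eval (v i) * ∏ j ∈ s.erase i, v j / (v j - v i) := by
  rw [eval_eq_sum_mul_prod hvs hp 0]
  refine sum_congr rfl fun i _ => congrArg _ (prod_congr rfl fun j _ => ?_)
  rw [zero_sub, ← neg_sub, neg_div_neg_eq]

end Lagrange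

section FinSum

variable {R : Type*} [CommSemiring R] {M : ℕ} (c : Fin M → R)

theorem eval_zero_sum_fin_C_mul_X_pow (hM : 0 < M) :
    (∑ n : Fin M, C (c n) * X ^ (n : ℕ)).eval 0 = c ⟨0, hM⟩ := by
  rw [eval_finsetSum, sum_eq_single ⟨0, hM⟩ (fun n _ hn => ?_) (by simp)]
  · simp
  · simp [zero_pow (Fin.val_ne_iff.mpr hn)]

theorem mul_eval_sum_fin_C_mul_X_pow (x : R) :
    x * (∑ n : Fin M, C (c n) * X ^ (n : ℕ)).eval x = ∑ n : Fin M, x ^ ((n : ℕ) + 1) * c n := by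
  simp only [eval_finsetSum, mul_sum, eval_mul, eval_C, eval_pow, eval_X]
  exact sum_congr rfl fun n _ => by ring

end FinSum

/-- Closed (Lagrange-interpolation type) form for the first component of the
solution of the truncated decoy linear system:
`X 1 = ∑ i (e^{μ i} Q₊(μ i) / μ i) ∏_{j ≠ i} μ j / (μ j - μ i)`. -/
theorem X_one_closed_form (M : ℕ) (hM : 0 < M)
    (μ : Fin M → ℝ) (hpos : ∀ i, 0 < μ i) (hinj : Function.Injective μ)
    (Qp : Fin M → ℝ)
    (X : Fin M → ℝ)
    (hX : ∀ i : Fin M,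
      ∑ n : Fin M, μ i ^ ((n : ℕ) + 1) / (((n : ℕ) + 1).factorial : ℝ) * X n =
        Real.exp (μ i) * Qp i) :
    X ⟨0, hM⟩ = ∑ i : Fin M, Real.exp (μ i) * Qp i / μ i *
      ∏ j ∈ Finset.univ.erase i, μ j / (μ j - μ i) := by
  set c : Fin M → ℝ := fun n => X n / ((n : ℕ) + 1).factorial
  set p : ℝ[X] := ∑ n : Fin M, C (c n) * Polynomial.X ^ (n : ℕ)
  have hp_deg : p.degree < #(univ : Finset (Fin M)) := by
    simpa using degree_sum_fin_lt c
  have hp_nodes : ∀ i, p.eval (μ i) = Real.exp (μ i) * Qp i / μ i := fun i => by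
    rw [eq_div_iff (hpos i).ne', mul_comm, mul_eval_sum_fin_C_mul_X_pow, ← hX i]
    exact sum_congr rfl fun n _ => by ring
  calc X ⟨0, hM⟩ = p.eval 0 := by simp [p, eval_zero_sum_fin_C_mul_X_pow c hM, c]
    _ = _ := by
      simp only [Lagrange.eval_zero_eq_sum_mul_prod hinj.injOn hp_deg, hp_nodes]
end

section
/- Let 0 < μ_1,...,μ_M ≤ 1, q_n = A(1−(1−η)^n)+B with 0 < A ≤ 1, 0 ≤ B ≤ η, and X_M as in the truncated system. If (L_0, a_0) with L_0 > M and 0 < a_0 ≤ 1 satisfies X_M/M! = (a_0/L_0!) s_{(L_0−M)}(μ) + ∑_{m=L_0+1}^∞ (1/m!) s_{(m−M)}(μ), then L_0 (L_0 − M)! ≤ M e / q_M. -/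
open Finset Nat

section DividedDifference

variable {K : Type*} [Field K] [DecidableEq K]

def divDiff (s : Finset K) (f : K → K) : K :=
  ∑ x ∈ s, f x / ∏ y ∈ s.erase x, (x - y)

@[simp]
theorem divDiff_empty (f : K → K) : divDiff ∅ f = 0 :=
  sum_empty

theorem divDiff_add (s : Finset K) (f g : K → K) :
    divDiff s (fun x => f x + g x) = divDiff s f + divDiff s g := by
  simp only [divDiff, add_div, sum_add_distrib]

theorem divDiff_const_mul (s : Finset K) (c : K) (f : K → K) :
    divDiff s (fun x => c * f x) = c * divDiff s f := by
  simp only [divDiff, mul_div_assoc, mul_sum]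

theorem divDiff_mul_const (s : Finset K) (f : K → K) (c : K) :
    divDiff s (fun x => f x * c) = divDiff s f * c := by
  simp only [divDiff, div_mul_eq_mul_div, sum_mul]

theorem divDiff_div_const (s : Finset K) (f : K → K) (c : K) :
    divDiff s (fun x => f x / c) = divDiff s f / c := by
  simp only [divDiff, sum_div, div_right_comm]

theorem divDiff_sum {ι : Type*} (s : Finset K) (t : Finset ι) (F : ι → K → K) :
    divDiff s (fun x => ∑ i ∈ t, F i x) = ∑ i ∈ t, divDiff s (F i) := by
  simp only [divDiff, sum_div]
  exact sum_comm

theorem hasSum_divDiff [TopologicalSpace K] [IsTopologicalRing K] {ι : Type*} {s : Finset K}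
    {F : ι → K → K} {f : K → K} (h : ∀ x ∈ s, HasSum (fun i => F i x) (f x)) :
    HasSum (fun i => divDiff s (F i)) (divDiff s f) :=
  hasSum_sum fun x hx => (h x hx).div_const _

theorem divDiff_sub_mul {s : Finset K} {y : K} (hy : y ∈ s) (f : K → K) :
    divDiff s (fun x => (x - y) * f x) = divDiff (s.erase y) f := by
  unfold divDiff
  rw [← add_sum_erase _ _ hy]
  simp only [sub_self, zero_mul, zero_div, zero_add]
  refine sum_congr rfl fun x hx => ?_
  have hxy : x - y ≠ 0 := sub_ne_zero.2 (ne_of_mem_erase hx)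
  rw [← mul_prod_erase _ _ (mem_erase.2 ⟨(ne_of_mem_erase hx).symm, hy⟩), erase_right_comm,
    mul_div_mul_left _ _ hxy]

theorem divDiff_pow_succ {s : Finset K} {y : K} (hy : y ∈ s) (n : ℕ) :
    divDiff s (· ^ (n + 1)) = y * divDiff s (· ^ n) + divDiff (s.erase y) (· ^ n) := by
  rw [← divDiff_const_mul, ← divDiff_sub_mul hy, ← divDiff_add]
  congr 1
  funext x
  ring

theorem divDiff_pow_of_lt_card {s : Finset K} {n : ℕ} (hn : n < #s) :
    divDiff s (· ^ n) = if n = #s - 1 then 1 else 0 := by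
  have h := Lagrange.coeff_eq_sum (s := s) (v := id) (Set.injOn_id _) (P := Polynomial.X ^ n)
    (by rw [Polynomial.degree_X_pow]; exact_mod_cast hn)
  simpa [Polynomial.coeff_X_pow, eq_comm, divDiff] using h.symm

theorem divDiff_pow_nonneg [LinearOrder K] [IsStrictOrderedRing K] {s : Finset K}
    (hs : ∀ x ∈ s, 0 ≤ x) (n : ℕ) : 0 ≤ divDiff s (· ^ n) := by
  induction n generalizing s with
  | zero =>
    rcases s.eq_empty_or_nonempty with rfl | hne
    · simp
    · rw [divDiff_pow_of_lt_card hne.card_pos]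
      split_ifs <;> norm_num
  | succ n ih =>
    rcases s.eq_empty_or_nonempty with rfl | ⟨y, hy⟩
    · simp
    · rw [divDiff_pow_succ hy]
      have := ih hs
      have := ih (s := s.erase y) fun x hx => hs x (mem_of_mem_erase hx)
      have := hs y hy
      positivity

theorem divDiff_sum_fin_pow_succ_div_factorial {M : ℕ} (hM : 0 < M) {s : Finset K}
    (hs : #s = M + 1) (X : Fin M → K) :
    divDiff s (fun x => ∑ n : Fin M, x ^ ((n : ℕ) + 1) / ((n : ℕ) + 1)! * X n) =
      X ⟨M - 1, by omega⟩ / M ! := by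
  rw [divDiff_sum, sum_eq_single ⟨M - 1, by omega⟩]
  · simp only [divDiff_mul_const, divDiff_div_const,
      divDiff_pow_of_lt_card (by omega : M - 1 + 1 < #s)]
    rw [if_pos (by omega), Nat.sub_add_cancel hM]
    ring
  · intro n _ hn
    have hn' : (n : ℕ) + 1 ≠ M := fun h => hn (Fin.ext (by simp; omega))
    simp only [divDiff_mul_const, divDiff_div_const,
      divDiff_pow_of_lt_card (by omega : (n : ℕ) + 1 < #s)]
    rw [if_neg (by omega)]
    ring
  · simp

end DividedDifference

theorem summable_pow_succ_div_factorial_mul (x : ℝ) {q : ℕ → ℝ} {C : ℝ} (hq : ∀ n, |q n| ≤ C) :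
    Summable fun n => x ^ (n + 1) / (n + 1)! * q (n + 1) := by
  refine .of_norm_bounded
    (((Real.summable_pow_div_factorial |x|).comp_injective (add_left_injective 1)).mul_right C)
    fun n => ?_
  rw [norm_mul, norm_div, norm_pow, Real.norm_eq_abs, RCLike.norm_natCast]
  exact mul_le_mul_of_nonneg_left (hq _) (by positivity)

theorem div_factorial_le_of_interpolates {M : ℕ} (hM : 0 < M) {μ : Fin M → ℝ}
    (hpos : ∀ i, 0 < μ i) (hinj : Function.Injective μ) {q : ℕ → ℝ} {C : ℝ}
    (hq0 : ∀ n, 0 ≤ q n) (hqC : ∀ n, q n ≤ C) {X : Fin M → ℝ}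
    (hX : ∀ i : Fin M,
      ∑ n : Fin M, μ i ^ ((n : ℕ) + 1) / ((n : ℕ) + 1)! * X n =
        ∑' n : ℕ, μ i ^ (n + 1) / (n + 1)! * q (n + 1)) :
    q M / M ! ≤ X ⟨M - 1, by omega⟩ / M ! := by
  -- Both sides of `hX` vanish at the extra node `0`, which brings the number of nodes to `M + 1`:
  -- exactly enough for the divided difference to isolate the top coefficient.
  set s : Finset ℝ := insert 0 (univ.image μ)
  have h0 : (0 : ℝ) ∉ univ.image μ := by simpa using fun i => (hpos i).ne'
  have hs : #s = M + 1 := by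
    rw [card_insert_of_notMem h0, card_image_of_injective _ hinj, Finset.card_univ,
      Fintype.card_fin]
  have hs0 : ∀ x ∈ s, 0 ≤ x := by
    simpa [s] using fun i => (hpos i).le
  have hqabs : ∀ n, |q n| ≤ C := fun n => (abs_of_nonneg (hq0 n)).trans_le (hqC n)
  have hseries : ∀ x ∈ s, HasSum (fun n => x ^ (n + 1) / (n + 1)! * q (n + 1))
      (∑ n : Fin M, x ^ ((n : ℕ) + 1) / ((n : ℕ) + 1)! * X n) := by
    simp only [s, mem_insert, mem_image, mem_univ, true_and]
    rintro x (rfl | ⟨i, rfl⟩)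
    · simp
    · rw [hX i]
      exact (summable_pow_succ_div_factorial_mul _ hqabs).hasSum
  have hterm : ∀ n, divDiff s (fun x => x ^ (n + 1) / (n + 1)! * q (n + 1)) =
      divDiff s (· ^ (n + 1)) / (n + 1)! * q (n + 1) := fun n => by
    rw [divDiff_mul_const, divDiff_div_const]
  have h := le_hasSum (hasSum_divDiff hseries) (M - 1) fun n _ => by
    rw [hterm]
    have := divDiff_pow_nonneg hs0 (n + 1)
    have := hq0 (n + 1)
    positivity
  rwa [hterm, divDiff_sum_fin_pow_succ_div_factorial hM hs, divDiff_pow_of_lt_card (by omega),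
    if_pos (by omega), Nat.sub_add_cancel hM, one_div_mul_eq_div] at h

def IsSemistandard {M : ℕ} (lam : List ℕ) (T : youngCells lam → Fin M) : Prop :=
  (∀ c c' : youngCells lam,
      (c : ℕ × ℕ).1 = (c' : ℕ × ℕ).1 → (c : ℕ × ℕ).2 + 1 = (c' : ℕ × ℕ).2 → T c ≤ T c') ∧
    (∀ c c' : youngCells lam,
      (c : ℕ × ℕ).1 + 1 = (c' : ℕ × ℕ).1 → (c : ℕ × ℕ).2 = (c' : ℕ × ℕ).2 → T c < T c')

instance {M : ℕ} (lam : List ℕ) (T : youngCells lam → Fin M) :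
    Decidable (IsSemistandard lam T) :=
  inferInstanceAs (Decidable (_ ∧ _))

theorem schur_eq_sum_isSemistandard (M : ℕ) (μ : Fin M → ℝ) (lam : List ℕ) :
    schur M μ lam = ∑ T, if IsSemistandard lam T then ∏ c, μ (T c) else 0 :=
  rfl

section Schur

variable {M : ℕ} {μ : Fin M → ℝ}

theorem schur_nonneg (h0 : ∀ i, 0 ≤ μ i) (lam : List ℕ) : 0 ≤ schur M μ lam :=
  sum_nonneg fun _ _ => by split_ifs; exacts [prod_nonneg fun c _ => h0 _, le_rfl]

theorem schur_le_card_isSemistandard (h0 : ∀ i, 0 ≤ μ i) (h1 : ∀ i, μ i ≤ 1) (lam : List ℕ) :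
    schur M μ lam ≤ #{T : youngCells lam → Fin M | IsSemistandard lam T} := by
  rw [schur_eq_sum_isSemistandard, card_filter, Nat.cast_sum]
  refine sum_le_sum fun T _ => ?_
  split_ifs
  · simpa using prod_le_one (fun c _ => h0 (T c)) fun c _ => h1 (T c)
  · simp

end Schur

def rowCell (k : ℕ) (j : Fin k) : youngCells [k] :=
  ⟨(0, j), by simp [youngCells]⟩

theorem rowCell_surjective (k : ℕ) : Function.Surjective (rowCell k) := by
  rintro ⟨⟨i, j⟩, hc⟩
  simp only [youngCells, List.length_singleton, range_one, singleton_biUnion, mem_product,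
    mem_singleton, List.getD_cons_zero, mem_range] at hc
  exact ⟨⟨j, hc.2⟩, by simp [rowCell, hc.1]⟩

theorem IsSemistandard.monotone_comp_rowCell {M k : ℕ} {T : youngCells [k] → Fin M}
    (hT : IsSemistandard [k] T) : Monotone (T ∘ rowCell k) := by
  cases k with
  | zero => exact Subsingleton.monotone _
  | succ n => exact Fin.monotone_iff_le_succ.2 fun i => hT.1 _ _ rfl rfl

theorem Monotone.eq_of_perm_ofFn {α : Type*} [LinearOrder α] {k : ℕ} {f g : Fin k → α}
    (hf : Monotone f) (hg : Monotone g) (h : (List.ofFn f).Perm (List.ofFn g)) : f = g :=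
  List.ofFn_injective (h.eq_of_sortedLE hf.sortedLE_ofFn hg.sortedLE_ofFn)

theorem card_isSemistandard_singleton_le (M k : ℕ) :
    #{T : youngCells [k] → Fin M | IsSemistandard [k] T} ≤ (M + k - 1).choose k := by
  calc #{T : youngCells [k] → Fin M | IsSemistandard [k] T}
      ≤ #(univ : Finset (Sym (Fin M) k)) := by
        refine card_le_card_of_injOn
          (fun T => ⟨(List.ofFn (T ∘ rowCell k) : Multiset (Fin M)), by simp⟩)
          (fun _ _ => mem_univ _) fun T hT T' hT' hTT' => ?_
        simp only [coe_filter, mem_univ, true_and, Set.mem_ofPred_eq] at hT hT'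
        have := (hT.monotone_comp_rowCell).eq_of_perm_ofFn hT'.monotone_comp_rowCell
          (Multiset.coe_eq_coe.1 (congrArg Sym.toMultiset hTT'))
        exact (rowCell_surjective k).injective_comp_right this
    _ = (M + k - 1).choose k := by simp [Sym.card_sym_eq_choose]

theorem schur_singleton_le_choose {M : ℕ} {μ : Fin M → ℝ} (h0 : ∀ i, 0 ≤ μ i)
    (h1 : ∀ i, μ i ≤ 1) (k : ℕ) : schur M μ [k] ≤ (M + k - 1).choose k :=
  (schur_le_card_isSemistandard h0 h1 [k]).trans
    (by exact_mod_cast card_isSemistandard_singleton_le M k)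

theorem schur_singleton_div_factorial_le {M m : ℕ} {μ : Fin M → ℝ} (h0 : ∀ i, 0 ≤ μ i)
    (h1 : ∀ i, μ i ≤ 1) (hM : 0 < M) (hMm : M ≤ m) :
    schur M μ [m - M] / m ! ≤ 1 / (m * (M - 1)! * (m - M)!) := by
  have hm : (0 : ℝ) < m := by exact_mod_cast hM.trans_le hMm
  have hchoose : (m - 1).choose (m - M) * (m * (M - 1)! * (m - M)!) = m ! := by
    have h := Nat.choose_mul_factorial_mul_factorial (show m - M ≤ m - 1 by omega)
    rw [show m - 1 - (m - M) = M - 1 by omega] at h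
    rw [← Nat.mul_factorial_pred (show m ≠ 0 by omega), ← h]
    ring
  calc schur M μ [m - M] / m ! ≤ (m - 1).choose (m - M) / m ! := by
        gcongr
        simpa [show M + (m - M) - 1 = m - 1 by omega] using
          schur_singleton_le_choose h0 h1 (m - M)
    _ = 1 / (m * (M - 1)! * (m - M)!) := by
        rw [div_eq_div_iff (by positivity) (by positivity), one_mul]
        exact_mod_cast hchoose

theorem hasSum_one_div_factorial : HasSum (fun n => 1 / n ! : ℕ → ℝ) (Real.exp 1) := by
  simpa [Real.exp_eq_exp_ℝ] using NormedSpace.expSeries_div_hasSum_exp (1 : ℝ)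

theorem one_div_factorial_add_le (c n : ℕ) : (1 : ℝ) / (c + n)! ≤ 1 / c ! * (1 / n !) := by
  rw [one_div_mul_one_div]
  gcongr
  exact_mod_cast Nat.le_of_dvd (factorial_pos _) (factorial_mul_factorial_dvd_factorial_add c n)

theorem summable_one_div_factorial_add (c : ℕ) : Summable fun n => (1 : ℝ) / (c + n)! :=
  .of_nonneg_of_le (fun _ => by positivity) (one_div_factorial_add_le c)
    (hasSum_one_div_factorial.summable.mul_left _)

theorem tsum_one_div_factorial_add_le (c : ℕ) :
    ∑' n, (1 : ℝ) / (c + n)! ≤ Real.exp 1 / c ! := by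
  rw [div_eq_inv_mul, ← one_div]
  exact hasSum_le (one_div_factorial_add_le c) (summable_one_div_factorial_add c).hasSum
    (hasSum_one_div_factorial.mul_left _)

theorem schur_series_le {M L : ℕ} {μ : Fin M → ℝ} (h0 : ∀ i, 0 ≤ μ i) (h1 : ∀ i, μ i ≤ 1)
    (hM : 0 < M) (hML : M < L) {a : ℝ} (ha : a ≤ 1) :
    a / L ! * schur M μ [L - M] + ∑' k : ℕ, 1 / (L + 1 + k)! * schur M μ [L + 1 + k - M] ≤
      Real.exp 1 / (L * (M - 1)! * (L - M)!) := by
  have hL : (0 : ℝ) < L := by exact_mod_cast hM.trans hML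
  set t : ℕ → ℝ := fun k => 1 / (L + k)! * schur M μ [L + k - M]
  set K : ℝ := 1 / (L * (M - 1)!)
  have htle : ∀ k, t k ≤ K * (1 / (L - M + k)!) := fun k => by
    calc t k = schur M μ [L + k - M] / (L + k)! := one_div_mul_eq_div _ _
      _ ≤ 1 / ((L + k : ℕ) * (M - 1)! * (L + k - M)!) :=
          schur_singleton_div_factorial_le h0 h1 hM (by omega)
      _ ≤ K * (1 / (L - M + k)!) := by
          rw [show L + k - M = L - M + k by omega, one_div_mul_one_div]
          gcongr
          exact_mod_cast Nat.le_add_right L k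
  have hK : Summable fun k => K * (1 / (L - M + k)!) :=
    (summable_one_div_factorial_add _).mul_left K
  have ht : Summable t :=
    .of_nonneg_of_le (fun k => mul_nonneg (by positivity) (schur_nonneg h0 _)) htle hK
  calc a / L ! * schur M μ [L - M] + ∑' k : ℕ, 1 / (L + 1 + k)! * schur M μ [L + 1 + k - M]
      ≤ t 0 + ∑' k, t (k + 1) := by
        refine add_le_add ?_
          (tsum_congr fun k => by simp only [t, add_right_comm L 1, add_assoc L]).le
        exact mul_le_mul_of_nonneg_right (by rw [add_zero]; gcongr) (schur_nonneg h0 _)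
    _ = ∑' k, t k := ht.tsum_eq_zero_add.symm
    _ ≤ ∑' k, K * (1 / (L - M + k)!) := ht.tsum_le_tsum htle hK
    _ ≤ K * (Real.exp 1 / (L - M)!) := by
        rw [tsum_mul_left]
        gcongr
        exact tsum_one_div_factorial_add_le _
    _ = Real.exp 1 / (L * (M - 1)! * (L - M)!) := by
        simp only [K]
        field_simp

/-- Upper bound on the cut-off `L₀` in the configuration `Z` for `M` odd-type
analysis: if `(L₀, a₀)` satisfies `Z_M = 0`, i.e.
`X_M / M! = (a₀ / L₀!) s_(L₀-M)(μ) + ∑_{m=L₀+1}^∞ s_(m-M)(μ)/m!`,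
then `L₀ (L₀ - M)! ≤ M e / q M`. -/
theorem L0_bound (M : ℕ) (hM : 0 < M)
    (μ : Fin M → ℝ) (hpos : ∀ i, 0 < μ i) (hle : ∀ i, μ i ≤ 1)
    (hinj : Function.Injective μ)
    (A B η : ℝ) (hA0 : 0 < A) (hB0 : 0 ≤ B)
    (hη0 : 0 < η) (hη1 : η ≤ 1)
    (q : ℕ → ℝ) (hq : ∀ n, q n = A * (1 - (1 - η) ^ n) + B)
    (X : Fin M → ℝ)
    (hX : ∀ i : Fin M,
      ∑ n : Fin M, μ i ^ ((n : ℕ) + 1) / (((n : ℕ) + 1).factorial : ℝ) * X n =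
        ∑' n : ℕ, μ i ^ (n + 1) / ((n + 1).factorial : ℝ) * q (n + 1))
    (L₀ : ℕ) (hL₀ : M < L₀) (a₀ : ℝ) (ha₀' : a₀ ≤ 1)
    (heq : X ⟨M - 1, by omega⟩ / (M.factorial : ℝ) =
      a₀ / (L₀.factorial : ℝ) * schur M μ [L₀ - M] +
      ∑' k : ℕ, (1 / ((L₀ + 1 + k).factorial : ℝ)) * schur M μ [L₀ + 1 + k - M]) :
    (L₀ : ℝ) * ((L₀ - M).factorial : ℝ) ≤ (M : ℝ) * Real.exp 1 / q M := by
  have h1η : 0 ≤ 1 - η := by linarith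
  have hq0 : ∀ n, 0 ≤ q n := fun n => by
    rw [hq]
    have := pow_le_one₀ (n := n) h1η (by linarith)
    nlinarith
  have hqC : ∀ n, q n ≤ A + B := fun n => by
    rw [hq]
    have := pow_nonneg h1η n
    nlinarith
  have hqM : 0 < q M := by
    rw [hq]
    have := pow_lt_one₀ h1η (by linarith) hM.ne'
    nlinarith
  have hbound : q M / M ! ≤ Real.exp 1 / (L₀ * (M - 1)! * (L₀ - M)!) :=
    (div_factorial_le_of_interpolates hM hpos hinj hq0 hqC hX).trans
      (heq.trans_le (schur_series_le (fun i => (hpos i).le) hle hM hL₀ ha₀'))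
  have hL₀pos : (0 : ℝ) < L₀ := by exact_mod_cast hM.trans hL₀
  rw [← Nat.mul_factorial_pred hM.ne', div_le_div_iff₀ (by positivity) (by positivity)] at hbound
  rw [le_div_iff₀ hqM]
  refine le_of_mul_le_mul_right ?_ (by positivity : (0 : ℝ) < (M - 1)!)
  push_cast at hbound
  linear_combination hbound
end
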